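/- Let (Ω, 𝔉, P) be a probability space, X a nonempty set, c ∈ (0, 1], and for each x ∈ X let F(x) : Ω → ℝ be a square-integrable random variable. Define f(x) := E[F(x)], h(x) := f(x) + c·(E[(F(x) − f(x))₊²])^{1/2}, and φ(x, y, z) := (c/z)·E[(F(x) − y)₊²] + y + (c/4)·z. Fix ε > 0 and the feasible set S_ε := {(x, y, z) : x ∈ X, y ≥ f(x), z ≥ ε}. Suppose x* minimizes h over X and (x*_ε, y*_ε, z*_ε) minimizes φ over S_ε. Then h(x*_ε) − h(x*) ≤ (c/2)·ε. -/

import Mathlib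

open MeasureTheory

/-! The lifted objective dominates `h`: for `y ≥ f x` the shift inequality
`‖(F - f)₊‖₂ ≤ ‖(F - y)₊‖₂ + (y - f)` (Minkowski against a constant) together with
`c ≤ 1` gives `h x ≤ y + c ‖(F - y)₊‖₂`, and AM-GM in the form `√a ≤ a / z + z / 4` bounds
the last term by the `z`-part of `φ`. Conversely, with `s = ‖(F(x*) - f(x*))₊‖₂`, the point
`(x*, f(x*), 2s + ε)` (the AM-GM optimum `z = 2s`, pushed into `z ≥ ε`) is feasible and
has value at most `h(x*) + cε/4`. -/

section Lifting

variable {Ω : Type*} [MeasurableSpace Ω] {μ : Measure Ω} [IsProbabilityMeasure μ]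

theorem integral_le_sqrt_integral_sq {g : Ω → ℝ} (hg : MemLp g 2 μ) :
    ∫ ω, g ω ∂μ ≤ √(∫ ω, g ω ^ 2 ∂μ) := by
  have hvar := ProbabilityTheory.variance_nonneg g μ
  rw [ProbabilityTheory.variance_eq_sub hg] at hvar
  calc ∫ ω, g ω ∂μ ≤ |∫ ω, g ω ∂μ| := le_abs_self _
    _ = √((∫ ω, g ω ∂μ) ^ 2) := (Real.sqrt_sq_eq_abs _).symm
    _ ≤ √(∫ ω, g ω ^ 2 ∂μ) :=
      Real.sqrt_le_sqrt (by simpa only [Pi.pow_apply, sub_nonneg] using hvar)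

theorem sqrt_integral_sq_le_add_const {u v : Ω → ℝ} {d : ℝ} (hv : MemLp v 2 μ) (hd : 0 ≤ d)
    (hu : ∀ ω, 0 ≤ u ω) (huv : ∀ ω, u ω ≤ v ω + d) :
    √(∫ ω, u ω ^ 2 ∂μ) ≤ √(∫ ω, v ω ^ 2 ∂μ) + d := by
  have hv_int : Integrable v μ := hv.integrable one_le_two
  have hv_sq_int : Integrable (fun ω => v ω ^ 2) μ := hv.integrable_sq
  have h_expand : ∫ ω, (v ω + d) ^ 2 ∂μ = ∫ ω, v ω ^ 2 ∂μ + 2 * d * ∫ ω, v ω ∂μ + d ^ 2 := by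
    simp_rw [show ∀ ω, (v ω + d) ^ 2 = v ω ^ 2 + 2 * d * v ω + d ^ 2 from fun ω => by ring]
    have h_lin_int : Integrable (fun ω => v ω ^ 2 + 2 * d * v ω) μ :=
      hv_sq_int.add (hv_int.const_mul _)
    rw [integral_add h_lin_int (integrable_const _),
      integral_add hv_sq_int (hv_int.const_mul _), integral_const_mul,
      integral_const]
    simp
  have h_sq_le : ∫ ω, u ω ^ 2 ∂μ ≤ ∫ ω, (v ω + d) ^ 2 ∂μ :=
    integral_mono_of_nonneg (.of_forall fun ω => sq_nonneg _)
      ((hv.add (memLp_const d)).integrable_sq)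
      (.of_forall fun ω => pow_le_pow_left₀ (hu ω) (huv ω) 2)
  have h_cs := integral_le_sqrt_integral_sq hv
  have h_sqrt_sq := Real.sq_sqrt (integral_nonneg (μ := μ) fun ω => sq_nonneg (v ω))
  rw [← Real.sqrt_sq (by positivity : 0 ≤ √(∫ ω, v ω ^ 2 ∂μ) + d)]
  refine Real.sqrt_le_sqrt (h_sq_le.trans ?_)
  nlinarith

theorem sqrt_integral_posPart_sq_le {G : Ω → ℝ} (hG : MemLp G 2 μ) {m y : ℝ} (hmy : m ≤ y) :
    √(∫ ω, max (G ω - m) 0 ^ 2 ∂μ) ≤ √(∫ ω, max (G ω - y) 0 ^ 2 ∂μ) + (y - m) :=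
  sqrt_integral_sq_le_add_const (hG.sub (memLp_const y)).pos_part (sub_nonneg.2 hmy)
    (fun ω => le_max_right _ _)
    (fun ω => max_le (by linarith [le_max_left (G ω - y) 0])
      (by linarith [le_max_right (G ω - y) 0]))

theorem Real.sqrt_le_div_add_div_four {a z : ℝ} (ha : 0 ≤ a) (hz : 0 < z) :
    √a ≤ a / z + z / 4 := by
  have h_gap : a / z + z / 4 - √a = (√a - z / 2) ^ 2 / z := by
    field_simp
    linear_combination (-16) * Real.sq_sqrt ha
  linarith [div_nonneg (sq_nonneg (√a - z / 2)) hz.le]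

theorem sq_div_add_div_four_le {s ε : ℝ} (hs : 0 ≤ s) (hε : 0 < ε) :
    s ^ 2 / (2 * s + ε) + (2 * s + ε) / 4 ≤ s + ε / 4 := by
  have h_pos : 0 < 2 * s + ε := by positivity
  have : s ^ 2 / (2 * s + ε) ≤ s / 2 := by
    rw [div_le_iff₀ h_pos]
    nlinarith
  linarith

theorem add_mul_sqrt_integral_posPart_sq_le {G : Ω → ℝ} (hG : MemLp G 2 μ) {c m y z : ℝ}
    (hc0 : 0 ≤ c) (hc1 : c ≤ 1) (hmy : m ≤ y) (hz : 0 < z) :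
    m + c * √(∫ ω, max (G ω - m) 0 ^ 2 ∂μ) ≤
      c / z * ∫ ω, max (G ω - y) 0 ^ 2 ∂μ + y + c / 4 * z := by
  set a := ∫ ω, max (G ω - y) 0 ^ 2 ∂μ
  have h_shift := mul_le_mul_of_nonneg_left (sqrt_integral_posPart_sq_le hG hmy) hc0
  have h_amgm := mul_le_mul_of_nonneg_left
    (Real.sqrt_le_div_add_div_four (integral_nonneg fun ω => sq_nonneg _) hz :
      √a ≤ a / z + z / 4) hc0
  have h_c_le : c * (y - m) ≤ y - m := mul_le_of_le_one_left (sub_nonneg.2 hmy) hc1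
  have h_rhs : c * (a / z + z / 4) = c / z * a + c / 4 * z := by ring
  linarith

end Lifting

theorem stmt_6_general {Ω X : Type*} [MeasurableSpace Ω]
    (P : Measure Ω) [IsProbabilityMeasure P]
    (c : ℝ) (hc : c ∈ Set.Ioc (0 : ℝ) 1)
    (F : X → Ω → ℝ) (hF : ∀ x, MemLp (F x) 2 P)
    (f h : X → ℝ) (φ : X → ℝ → ℝ → ℝ)
    (hh : ∀ x, h x = f x + c * Real.sqrt (∫ ω, (max (F x ω - f x) 0) ^ 2 ∂P))
    (hφ : ∀ x y z, φ x y z = (c / z) * (∫ ω, (max (F x ω - y) 0) ^ 2 ∂P) + y + (c / 4) * z)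
    (ε : ℝ) (hε : 0 < ε)
    (xs : X)
    (xe : X) (ye ze : ℝ) (hye : f xe ≤ ye) (hze : ε ≤ ze)
    (hmin : ∀ x y z, f x ≤ y → ε ≤ z → φ xe ye ze ≤ φ x y z) :
    h xe - h xs ≤ (c / 2) * ε := by
  obtain ⟨hc0, hc1⟩ := hc
  have h_le_φ : h xe ≤ φ xe ye ze := by
    rw [hh, hφ]
    exact add_mul_sqrt_integral_posPart_sq_le (hF xe) hc0.le hc1 hye (hε.trans_le hze)
  set a := ∫ ω, max (F xs ω - f xs) 0 ^ 2 ∂P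
  set s := √a
  have hs : 0 ≤ s := Real.sqrt_nonneg a
  have h_witness : φ xs (f xs) (2 * s + ε) ≤ h xs + c / 4 * ε := by
    have ha : a = s ^ 2 := (Real.sq_sqrt (integral_nonneg fun ω => sq_nonneg _)).symm
    rw [hφ, hh]
    calc c / (2 * s + ε) * a + f xs + c / 4 * (2 * s + ε)
        = f xs + c * (s ^ 2 / (2 * s + ε) + (2 * s + ε) / 4) := by rw [ha]; ring
      _ ≤ f xs + c * (s + ε / 4) :=
        add_le_add_right (mul_le_mul_of_nonneg_left (sq_div_add_div_four_le hs hε) hc0.le) _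
      _ = f xs + c * s + c / 4 * ε := by ring
  have h_opt := hmin xs (f xs) (2 * s + ε) le_rfl (by linarith)
  linarith [mul_pos hc0 hε]

/-- Approximate optimality of the truncated lifted problem: if `x*` minimizes
`h(x) = f(x) + c·√(E[(F(x) − f(x))₊²])` over `X` and `(x*_ε, y*_ε, z*_ε)` minimizes
`φ(x, y, z) = (c/z)·E[(F(x) − y)₊²] + y + (c/4)·z` over
`S_ε = {(x, y, z) : y ≥ f(x), z ≥ ε}`, then `h(x*_ε) − h(x*) ≤ (c/2)·ε`. -/
theorem stmt_6 {Ω X : Type*} [MeasurableSpace Ω] [Nonempty X]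
    (P : Measure Ω) [IsProbabilityMeasure P]
    (c : ℝ) (hc : c ∈ Set.Ioc (0 : ℝ) 1)
    (F : X → Ω → ℝ) (hF : ∀ x, MemLp (F x) 2 P)
    (f h : X → ℝ) (φ : X → ℝ → ℝ → ℝ)
    (hf : ∀ x, f x = ∫ ω, F x ω ∂P)
    (hh : ∀ x, h x = f x + c * Real.sqrt (∫ ω, (max (F x ω - f x) 0) ^ 2 ∂P))
    (hφ : ∀ x y z, φ x y z = (c / z) * (∫ ω, (max (F x ω - y) 0) ^ 2 ∂P) + y + (c / 4) * z)
    (ε : ℝ) (hε : 0 < ε)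
    (xs : X) (hxs : ∀ x, h xs ≤ h x)
    (xe : X) (ye ze : ℝ) (hye : f xe ≤ ye) (hze : ε ≤ ze)
    (hmin : ∀ x y z, f x ≤ y → ε ≤ z → φ xe ye ze ≤ φ x y z) :
    h xe - h xs ≤ (c / 2) * ε :=
  stmt_6_general P c hc F hF f h φ hh hφ ε hε xs xe ye ze hye hze hmin
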